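/- arXiv:1902.09406 — 2 statements merged into one kernel-verified Lean document; each statement's English description precedes it below -/
import Mathlib

section
/- Let X be a finite non-empty set with an imprecise probability tree (Q_s)_{s∈X*}. Let {M_n}_{n∈ℕ} be a countable collection of supermartingales that have a common lower bound, and let {λ_n}_{n∈ℕ} be non-negative reals with ∑_{n∈ℕ} λ_n =: λ ∈ ℝ. Then M := ∑_{n∈ℕ} λ_n M_n (pointwise sum on X*) is again a supermartingale; moreover, if all M_n are non-negative, then so is M. -/
open Filter Topology
open scoped ENNReal

/-- A function to the extended reals is bounded below by some real number. -/
def BddBelowF {Y : Type*} (f : Y → EReal) : Prop :=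
  ∃ M : ℝ, ∀ y, (M : EReal) ≤ f y

/-- An upper expectation on the bounded-below extended-real functions on `Y`:
axioms E1 (constants), E2 (subadditivity), E3 (positive/`+∞` homogeneity on
non-negative functions) and E4 (monotonicity). -/
structure IsUpperExpectation {Y : Type*} (E : (Y → EReal) → EReal) : Prop where
  const : ∀ c : ℝ, E (fun _ => (c : EReal)) = (c : EReal)
  subadd : ∀ f g : Y → EReal, BddBelowF f → BddBelowF g →
    E (fun y => f y + g y) ≤ E f + E g
  homog : ∀ lam : EReal, 0 < lam → ∀ f : Y → EReal, BddBelowF f → (∀ y, 0 ≤ f y) →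
    E (fun y => lam * f y) = lam * E f
  mono : ∀ f g : Y → EReal, BddBelowF f → BddBelowF g → (∀ y, f y ≤ g y) → E f ≤ E g

/-- The initial segment `ω^n = (ω_1, …, ω_n)` of a path `ω ∈ X^ℕ`. -/
def seg {X : Type*} (ω : ℕ → X) (n : ℕ) : List X :=
  List.ofFn (fun i : Fin n => ω i)

/-- The cylinder event `Γ(s)` of all paths going through the situation `s`. -/
def cyl {X : Type*} (s : List X) : Set (ℕ → X) :=
  {ω | seg ω s.length = s}

/-- A global variable is `n`-measurable if it only depends on the first `n` states. -/
def NMeas {X α : Type*} (n : ℕ) (f : (ℕ → X) → α) : Prop :=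
  ∀ ω ω' : ℕ → X, seg ω n = seg ω' n → f ω = f ω'

/-- A supermartingale for an imprecise probability tree `Q`: a bounded-below
extended-real process `M` on situations such that `Q_s(M(s·)) ≤ M(s)` everywhere. -/
def IsSupermartingale {X : Type*} (Q : List X → (X → EReal) → EReal)
    (M : List X → EReal) : Prop :=
  (∃ B : ℝ, ∀ s, (B : EReal) ≤ M s) ∧ ∀ s, Q s (fun x => M (s ++ [x])) ≤ M s

/-- The game-theoretic upper expectation `Ē_V(f | s)`. -/
noncomputable def gUE {X : Type*} (Q : List X → (X → EReal) → EReal)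
    (f : (ℕ → X) → EReal) (s : List X) : EReal :=
  sInf { y | ∃ M : List X → EReal, IsSupermartingale Q M ∧
    (∀ ω ∈ cyl s, f ω ≤ Filter.liminf (fun n => M (seg ω n)) Filter.atTop) ∧ M s = y }

noncomputable def te (x : EReal) : ℝ≥0∞ := if x = ⊤ then ⊤ else ENNReal.ofReal x.toReal

lemma te_coe {x : EReal} (hx : 0 ≤ x) : ((te x : ℝ≥0∞) : EReal) = x := by
  induction x using EReal.rec with
  | bot => exact absurd hx (by simp)
  | top => simp [te]
  | coe r =>
    have hr : 0 ≤ r := by exact_mod_cast hx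
    simp [te, EReal.coe_ennreal_ofReal, hr, max_eq_left hr]

lemma te_ne_top {x : EReal} (hx : x ≠ ⊤) : te x ≠ ⊤ := by
  simp [te, hx, ENNReal.ofReal_ne_top]

lemma te_pos {x : EReal} (hx : 0 < x) : 0 < te x := by
  rcases eq_or_ne x ⊤ with h | h
  · simp [te, h]
  · have := te_coe hx.le
    rw [pos_iff_ne_zero]
    intro h0
    rw [h0] at this
    simp at this
    exact absurd this.symm hx.ne'

lemma decomp {l : ℝ} (hl : 0 ≤ l) {m : EReal} {B : ℝ} (hB : (B : EReal) ≤ m) :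
    (l : EReal) * m = ((te ((l : EReal) * (m - (B : EReal)))) : EReal) + ((l * B : ℝ) : EReal) := by
  have hmB : (0 : EReal) ≤ m - (B : EReal) := by
    have h := EReal.sub_le_sub hB (le_refl (B : EReal))
    have hz : (B : EReal) - (B : EReal) = 0 := by
      rw [← EReal.coe_sub]; norm_num
    rwa [hz] at h
  have hprod : (0 : EReal) ≤ (l : EReal) * (m - (B : EReal)) := by
    have h0 : (0 : EReal) ≤ (l : EReal) := by exact_mod_cast hl
    calc (0:EReal) = (l : EReal) * 0 := by rw [mul_zero]
    _ ≤ _ := mul_le_mul_of_nonneg_left hmB h0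
  rw [te_coe hprod]
  rcases hl.eq_or_lt with h | h
  · subst h
    simp
  · induction m using EReal.rec with
    | bot => exact absurd hB (by simp)
    | top =>
      rw [EReal.top_sub_coe, EReal.coe_mul_top_of_pos h, EReal.top_add_coe]
    | coe r =>
      rw [show ((r : EReal) - (B : EReal)) = ((r - B : ℝ) : EReal) from (EReal.coe_sub r B).symm,
        ← EReal.coe_mul, ← EReal.coe_mul, ← EReal.coe_add]
      norm_cast
      ring

noncomputable def ennHom : ℝ≥0∞ →+ EReal :=
  ⟨⟨((↑) : ℝ≥0∞ → EReal), EReal.coe_ennreal_zero⟩, EReal.coe_ennreal_add⟩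

noncomputable def realHom : ℝ →+ EReal :=
  ⟨⟨((↑) : ℝ → EReal), EReal.coe_zero⟩, EReal.coe_add⟩

lemma hasSum_rep (lam : ℕ → ℝ) (hnn : ∀ n, 0 ≤ lam n) (hsum : Summable lam)
    (m : ℕ → EReal) (B : ℝ) (hB : ∀ n, (B : EReal) ≤ m n) :
    HasSum (fun n => (lam n : EReal) * m n)
      (((∑' n, te ((lam n : EReal) * (m n - (B : EReal)))) : ℝ≥0∞)
        + (((∑' n, lam n) * B : ℝ) : EReal)) := by
  set d : ℕ → ℝ≥0∞ := fun n => te ((lam n : EReal) * (m n - (B : EReal))) with hd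
  have h1 : Tendsto (fun s : Finset ℕ => ∑ n ∈ s, d n) atTop (𝓝 (∑' n, d n)) :=
    ENNReal.summable.hasSum
  have h2 : Tendsto (fun s : Finset ℕ => ∑ n ∈ s, lam n * B) atTop
      (𝓝 ((∑' n, lam n) * B)) := by
    have h := (hsum.mul_right B).hasSum
    rwa [tsum_mul_right] at h
  have hcont : ContinuousAt (fun p : EReal × EReal => p.1 + p.2)
      (((∑' n, d n : ℝ≥0∞) : EReal), (((∑' n, lam n) * B : ℝ) : EReal)) :=
    EReal.continuousAt_add (Or.inr (EReal.coe_ne_bot _)) (Or.inl (EReal.coe_ennreal_ne_bot _))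
  have h1' : Tendsto (fun s : Finset ℕ => ((∑ n ∈ s, d n : ℝ≥0∞) : EReal)) atTop
      (𝓝 ((∑' n, d n : ℝ≥0∞) : EReal)) :=
    (continuous_coe_ennreal_ereal.tendsto _).comp h1
  have h2' : Tendsto (fun s : Finset ℕ => ((∑ n ∈ s, lam n * B : ℝ) : EReal)) atTop
      (𝓝 (((∑' n, lam n) * B : ℝ) : EReal)) :=
    (continuous_coe_real_ereal.tendsto _).comp h2
  have hT := hcont.tendsto.comp (h1'.prodMk_nhds h2')
  have key : ∀ s : Finset ℕ, ∑ n ∈ s, (lam n : EReal) * m n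
      = ((∑ n ∈ s, d n : ℝ≥0∞) : EReal) + ((∑ n ∈ s, lam n * B : ℝ) : EReal) := by
    intro s
    rw [show ((∑ n ∈ s, d n : ℝ≥0∞) : EReal) = ∑ n ∈ s, ((d n : ℝ≥0∞) : EReal) from
        map_sum ennHom d s,
      show ((∑ n ∈ s, lam n * B : ℝ) : EReal) = ∑ n ∈ s, ((lam n * B : ℝ) : EReal) from
        map_sum realHom _ s,
      ← Finset.sum_add_distrib]
    exact Finset.sum_congr rfl fun n _ => decomp (hnn n) (hB n)
  rw [HasSum]
  exact hT.congr fun s => (key s).symm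

section UE
variable {Y : Type*} {Ev : (Y → EReal) → EReal}

lemma bdd_of_nonneg {f : Y → EReal} (hf : ∀ y, 0 ≤ f y) : BddBelowF f :=
  ⟨0, fun y => by simpa using hf y⟩

lemma UE_zero (hE : IsUpperExpectation Ev) : Ev (fun _ => (0 : EReal)) = 0 := by
  have h := hE.const 0
  simpa using h

lemma UE_nonneg (hE : IsUpperExpectation Ev) {f : Y → EReal} (hf : ∀ y, 0 ≤ f y) :
    0 ≤ Ev f := by
  have h := hE.mono (fun _ => (0 : EReal)) f (bdd_of_nonneg (by simp))
    (bdd_of_nonneg hf) hf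
  rwa [UE_zero hE] at h

lemma UE_finsum_le (hE : IsUpperExpectation Ev) {ι : Type*} (u : Finset ι)
    (f : ι → Y → EReal) (h0 : ∀ i y, 0 ≤ f i y) :
    Ev (fun y => ∑ i ∈ u, f i y) ≤ ∑ i ∈ u, Ev (f i) := by
  classical
  induction u using Finset.cons_induction with
  | empty => simpa using le_of_eq (UE_zero hE)
  | cons a u ha ih =>
    have hsub := hE.subadd (f a) (fun y => ∑ i ∈ u, f i y) (bdd_of_nonneg (h0 a))
      (bdd_of_nonneg fun y => Finset.sum_nonneg fun i _ => h0 i y)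
    calc Ev (fun y => ∑ i ∈ Finset.cons a u ha, f i y)
        = Ev (fun y => f a y + ∑ i ∈ u, f i y) :=
          congrArg Ev (funext fun y => Finset.sum_cons ha)
      _ ≤ Ev (f a) + Ev (fun y => ∑ i ∈ u, f i y) := hsub
      _ ≤ Ev (f a) + ∑ i ∈ u, Ev (f i) := add_le_add_right ih _
      _ = ∑ i ∈ Finset.cons a u ha, Ev (f i) := (Finset.sum_cons (f := fun i => Ev (f i)) ha).symm

variable [DecidableEq Y]

lemma UE_ind_nonneg (hE : IsUpperExpectation Ev) (x : Y) :
    0 ≤ Ev (fun y => if y = x then (1 : EReal) else 0) :=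
  UE_nonneg hE fun y => by by_cases hy : y = x <;> simp [hy]

lemma UE_ind_ne_top (hE : IsUpperExpectation Ev) (x : Y) :
    Ev (fun y => if y = x then (1 : EReal) else 0) ≠ ⊤ := by
  have h := hE.mono (fun y => if y = x then (1 : EReal) else 0) (fun _ => ((1 : ℝ) : EReal))
    (bdd_of_nonneg fun y => by by_cases hy : y = x <;> simp [hy]) ⟨1, fun _ => le_refl _⟩
    (fun y => by by_cases hy : y = x <;> simp [hy])
  rw [hE.const 1] at h
  exact ne_top_of_le_ne_top (EReal.coe_ne_top 1) h

lemma UE_scaled_ind (hE : IsUpperExpectation Ev) (x : Y) {c : EReal} (hc : 0 ≤ c) :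
    Ev (fun y => if y = x then c else 0)
      = c * Ev (fun y => if y = x then (1 : EReal) else 0) := by
  rcases hc.eq_or_lt with h | h
  · rw [← h, zero_mul]
    have : (fun y => if y = x then (0 : EReal) else 0) = (fun _ : Y => (0 : EReal)) := by
      funext y; split <;> rfl
    rw [← h] at *
    simpa [this] using UE_zero hE
  · have hh := hE.homog c h (fun y => if y = x then (1 : EReal) else 0)
      (bdd_of_nonneg fun y => by by_cases hy : y = x <;> simp [hy]) (fun y => by by_cases hy : y = x <;> simp [hy])
    rw [← hh]
    congr 1
    funext y
    by_cases hy : y = x <;> simp [hy]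

end UE

set_option maxHeartbeats 2000000 in
lemma central {Y : Type*} [Fintype Y] [DecidableEq Y] {Ev : (Y → EReal) → EReal}
    (hE : IsUpperExpectation Ev) (d : ℕ → Y → ℝ≥0∞) (ds : ℕ → ℝ≥0∞)
    (hstep : ∀ n, Ev (fun x => ((d n x : ℝ≥0∞) : EReal)) ≤ ((ds n : ℝ≥0∞) : EReal)) :
    Ev (fun x => ((∑' n, d n x : ℝ≥0∞) : EReal)) ≤ ((∑' n, ds n : ℝ≥0∞) : EReal) := by
  classical
  set Ss : ℝ≥0∞ := ∑' n, ds n with hSs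
  rcases eq_or_ne Ss ⊤ with hS | hS
  · rw [hS, EReal.coe_ennreal_top]; exact le_top
  set α : Y → EReal := fun x => Ev (fun y => if y = x then (1 : EReal) else 0) with hα
  set a : Y → ℝ≥0∞ := fun x => te (α x) with ha
  have hα0 : ∀ x, 0 ≤ α x := fun x => UE_ind_nonneg hE x
  have haα : ∀ x, ((a x : ℝ≥0∞) : EReal) = α x := fun x => te_coe (hα0 x)
  have haT : ∀ x, a x ≠ ⊤ := fun x => te_ne_top (UE_ind_ne_top hE x)
  have hmul : ∀ (c : ℝ≥0∞) (x : Y), ((c * a x : ℝ≥0∞) : EReal) = (c : EReal) * α x := by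
    intro c x; rw [EReal.coe_ennreal_mul, haα]
  have hkey : ∀ (n : ℕ) (x : Y), d n x * a x ≤ ds n := by
    intro n x
    rw [← EReal.coe_ennreal_le_coe_ennreal_iff, hmul]
    calc (d n x : EReal) * α x
        = Ev (fun y => if y = x then ((d n x : ℝ≥0∞) : EReal) else 0) :=
          (UE_scaled_ind hE x (EReal.coe_ennreal_nonneg _)).symm
      _ ≤ Ev (fun y => ((d n y : ℝ≥0∞) : EReal)) :=
          hE.mono _ _
            (bdd_of_nonneg fun y => by
              by_cases hy : y = x <;> simp [hy, EReal.coe_ennreal_nonneg])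
            (bdd_of_nonneg fun y => EReal.coe_ennreal_nonneg _)
            (fun y => by by_cases hy : y = x <;> simp [hy, EReal.coe_ennreal_nonneg])
      _ ≤ (ds n : EReal) := hstep n
  have hfin : ∀ x, 0 < α x → (∑' n, d n x) ≠ ⊤ := by
    intro x hx hT
    have h2 : (∑' n, d n x * a x) ≤ Ss := ENNReal.tsum_le_tsum fun n => hkey n x
    rw [ENNReal.tsum_mul_right, hT] at h2
    have hax : a x ≠ 0 := (te_pos hx).ne'
    rw [ENNReal.top_mul hax] at h2
    exact hS (top_le_iff.1 h2)
  have hmain : ∀ N : ℕ, Ev (fun x => ((∑' n, d n x : ℝ≥0∞) : EReal))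
      ≤ ((Ss + ∑ x ∈ Finset.univ, (∑' k, d (k + N) x) * a x : ℝ≥0∞) : EReal) := by
    intro N
    set T : ℝ≥0∞ := ∑ x ∈ Finset.univ, (∑' k, d (k + N) x) * a x with hT
    have hsplit : ∀ x : Y, ((∑' n, d n x : ℝ≥0∞) : EReal)
        = ((∑ n ∈ Finset.range N, d n x : ℝ≥0∞) : EReal)
          + ((∑' k, d (k + N) x : ℝ≥0∞) : EReal) := by
      intro x
      rw [← EReal.coe_ennreal_add,
        Summable.sum_add_tsum_nat_add' (f := fun n => d n x) (k := N) ENNReal.summable]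
    have h1 : Ev (fun x => ((∑' n, d n x : ℝ≥0∞) : EReal))
        ≤ Ev (fun x => ((∑ n ∈ Finset.range N, d n x : ℝ≥0∞) : EReal))
          + Ev (fun x => ((∑' k, d (k + N) x : ℝ≥0∞) : EReal)) := by
      refine le_trans (le_of_eq (congrArg Ev (funext hsplit))) ?_
      exact hE.subadd _ _ (bdd_of_nonneg fun y => EReal.coe_ennreal_nonneg _)
        (bdd_of_nonneg fun y => EReal.coe_ennreal_nonneg _)
    have h2 : Ev (fun x => ((∑ n ∈ Finset.range N, d n x : ℝ≥0∞) : EReal)) ≤ (Ss : EReal) := by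
      calc Ev (fun x => ((∑ n ∈ Finset.range N, d n x : ℝ≥0∞) : EReal))
          = Ev (fun x => ∑ n ∈ Finset.range N, ((d n x : ℝ≥0∞) : EReal)) := by
            exact congrArg Ev (funext fun x => map_sum ennHom _ _)
        _ ≤ ∑ n ∈ Finset.range N, Ev (fun x => ((d n x : ℝ≥0∞) : EReal)) :=
            UE_finsum_le hE _ _ (fun n x => EReal.coe_ennreal_nonneg _)
        _ ≤ ∑ n ∈ Finset.range N, ((ds n : ℝ≥0∞) : EReal) :=
            Finset.sum_le_sum fun n _ => hstep n
        _ = ((∑ n ∈ Finset.range N, ds n : ℝ≥0∞) : EReal) := (map_sum ennHom _ _).symm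
        _ ≤ (Ss : EReal) := EReal.coe_ennreal_le_coe_ennreal_iff.2 (ENNReal.sum_le_tsum _)
    have h3 : Ev (fun x => ((∑' k, d (k + N) x : ℝ≥0∞) : EReal)) ≤ (T : EReal) := by
      set R : Y → EReal := fun x => ((∑' k, d (k + N) x : ℝ≥0∞) : EReal) with hR
      have hR0 : ∀ x, 0 ≤ R x := fun x => EReal.coe_ennreal_nonneg _
      calc Ev R
          = Ev (fun y => ∑ x ∈ Finset.univ, (if y = x then R x else 0)) :=
            congrArg Ev (funext fun y =>
              (((Finset.sum_ite_eq Finset.univ y fun x => R x).trans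
                (if_pos (Finset.mem_univ y)))).symm)
        _ ≤ ∑ x ∈ Finset.univ, Ev (fun y => if y = x then R x else 0) :=
            UE_finsum_le hE _ _
              (fun x y => by by_cases hy : y = x <;> simp [hy, hR0 x])
        _ = ∑ x ∈ Finset.univ, R x * α x :=
            Finset.sum_congr rfl fun x _ => UE_scaled_ind hE x (hR0 x)
        _ = ((T : ℝ≥0∞) : EReal) := by
            rw [hT, show ((∑ x : Y, (∑' k, d (k + N) x) * a x : ℝ≥0∞) : EReal)
                = ∑ x : Y, ((((∑' k, d (k + N) x) * a x : ℝ≥0∞)) : EReal) from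
              map_sum ennHom _ _]
            exact Finset.sum_congr rfl fun x _ => (hmul _ x).symm
    calc Ev (fun x => ((∑' n, d n x : ℝ≥0∞) : EReal))
        ≤ _ + _ := h1
      _ ≤ (Ss : EReal) + (T : EReal) := add_le_add h2 h3
      _ = ((Ss + T : ℝ≥0∞) : EReal) := (EReal.coe_ennreal_add _ _).symm
  have hT0 : Tendsto (fun N => ∑ x ∈ Finset.univ, (∑' k, d (k + N) x) * a x)
      atTop (𝓝 0) := by
    have hterm : ∀ x ∈ Finset.univ,
        Tendsto (fun N => (∑' k, d (k + N) x) * a x) atTop (𝓝 0) := by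
      intro x _
      rcases eq_or_ne (a x) 0 with h0 | h0
      · simpa [h0] using (tendsto_const_nhds : Tendsto (fun _ : ℕ => (0:ℝ≥0∞)) atTop (𝓝 0))
      · have hx : 0 < α x := by
          rw [← haα]; exact EReal.coe_ennreal_pos.2 (pos_iff_ne_zero.2 h0)
        have ht := ENNReal.tendsto_sum_nat_add (fun n => d n x) (hfin x hx)
        have := ENNReal.Tendsto.mul_const ht (Or.inr (haT x))
        simpa using this
    have := tendsto_finset_sum Finset.univ hterm
    simpa using this
  have hTend : Tendsto
      (fun N => ((Ss + ∑ x ∈ Finset.univ, (∑' k, d (k + N) x) * a x : ℝ≥0∞) : EReal))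
      atTop (𝓝 ((Ss : ℝ≥0∞) : EReal)) := by
    have h := (tendsto_const_nhds : Tendsto (fun _ : ℕ => Ss) atTop (𝓝 Ss)).add hT0
    rw [add_zero] at h
    exact (continuous_coe_ennreal_ereal.tendsto _).comp h
  exact ge_of_tendsto' hTend hmain

lemma sub_nonneg_of_le' {m : EReal} {B : ℝ} (h : (B : EReal) ≤ m) : 0 ≤ m - (B : EReal) := by
  have hh := EReal.sub_le_sub h (le_refl (B : EReal))
  have hz : (B : EReal) - (B : EReal) = 0 := by rw [← EReal.coe_sub]; norm_num
  rwa [hz] at hh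

/-- Lemma 8: a countable non-negative linear combination (with real total weight)
of supermartingales with a common lower bound is a supermartingale; it is
non-negative whenever all the supermartingales are. -/
theorem stmt9 {X : Type*} [Fintype X] [Nonempty X]
    (Q : List X → (X → EReal) → EReal) (hQ : ∀ s, IsUpperExpectation (Q s))
    (Mn : ℕ → List X → EReal) (hMn : ∀ n, IsSupermartingale Q (Mn n))
    (hlb : ∃ B : ℝ, ∀ n s, (B : EReal) ≤ Mn n s)
    (lam : ℕ → ℝ) (hnn : ∀ n, 0 ≤ lam n) (hsum : Summable lam) :
    IsSupermartingale Q (fun s => ∑' n, (lam n : EReal) * Mn n s) ∧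
    ((∀ n s, 0 ≤ Mn n s) → ∀ s, 0 ≤ ∑' n, (lam n : EReal) * Mn n s) := by
  classical
  obtain ⟨B, hB⟩ := hlb
  set d : ℕ → List X → ℝ≥0∞ :=
    fun n t => te ((lam n : EReal) * (Mn n t - (B : EReal))) with hd
  set cL : ℝ := (∑' n, lam n) * B with hcL
  have key : ∀ t : List X, (∑' n, (lam n : EReal) * Mn n t)
      = ((∑' n, d n t : ℝ≥0∞) : EReal) + ((cL : ℝ) : EReal) :=
    fun t => (hasSum_rep lam hnn hsum (fun n => Mn n t) B (fun n => hB n t)).tsum_eq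
  have hstep : ∀ (s : List X) (n : ℕ),
      Q s (fun x => ((d n (s ++ [x]) : ℝ≥0∞) : EReal)) ≤ ((d n s : ℝ≥0∞) : EReal) := by
    intro s n
    have hco : ∀ t : List X, ((d n t : ℝ≥0∞) : EReal)
        = (lam n : EReal) * (Mn n t - (B : EReal)) := by
      intro t
      refine te_coe ?_
      calc (0 : EReal) = (lam n : EReal) * 0 := (mul_zero _).symm
        _ ≤ _ := mul_le_mul_of_nonneg_left (sub_nonneg_of_le' (hB n t))
            (by exact_mod_cast hnn n)
    simp only [hco]
    rcases (hnn n).eq_or_lt with h0 | h0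
    · simp only [← h0, EReal.coe_zero, zero_mul]
      exact le_of_eq (UE_zero (hQ s))
    · have hnn' : ∀ x, (0 : EReal) ≤ Mn n (s ++ [x]) - (B : EReal) :=
        fun x => sub_nonneg_of_le' (hB n _)
      have h1 : Q s (fun x => (lam n : EReal) * (Mn n (s ++ [x]) - (B : EReal)))
          = (lam n : EReal) * Q s (fun x => Mn n (s ++ [x]) - (B : EReal)) :=
        (hQ s).homog _ (by exact_mod_cast h0) _ (bdd_of_nonneg hnn') hnn'
      obtain ⟨B', hB'⟩ := (hMn n).1
      have h2 : Q s (fun x => Mn n (s ++ [x]) - (B : EReal))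
          ≤ Q s (fun x => Mn n (s ++ [x])) + ((-B : ℝ) : EReal) := by
        have hre : (fun x : X => Mn n (s ++ [x]) - (B : EReal))
            = fun x : X => Mn n (s ++ [x]) + ((-B : ℝ) : EReal) := by
          funext x
          rw [sub_eq_add_neg, EReal.coe_neg]
        rw [hre]
        have := (hQ s).subadd (fun x => Mn n (s ++ [x])) (fun _ => ((-B : ℝ) : EReal))
          ⟨B', fun x => hB' _⟩ ⟨-B, fun _ => le_refl _⟩
        rwa [(hQ s).const (-B)] at this
      have h3 : Q s (fun x => Mn n (s ++ [x])) + ((-B : ℝ) : EReal)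
          ≤ Mn n s - (B : EReal) := by
        rw [sub_eq_add_neg, EReal.coe_neg] at *
        exact add_le_add_left ((hMn n).2 s) _
      rw [h1]
      exact mul_le_mul_of_nonneg_left (h2.trans h3) (by exact_mod_cast (hnn n))
  constructor
  · constructor
    · refine ⟨cL, fun s => ?_⟩
      show ((cL : ℝ) : EReal) ≤ ∑' n, (lam n : EReal) * Mn n s
      rw [key s]
      calc ((cL : ℝ) : EReal) = 0 + ((cL : ℝ) : EReal) := (zero_add _).symm
        _ ≤ _ := add_le_add_left (EReal.coe_ennreal_nonneg _) _
    · intro s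
      show Q s (fun x => ∑' n, (lam n : EReal) * Mn n (s ++ [x]))
          ≤ ∑' n, (lam n : EReal) * Mn n s
      rw [key s]
      have hfe : (fun x => ∑' n, (lam n : EReal) * Mn n (s ++ [x]))
          = fun x => ((∑' n, d n (s ++ [x]) : ℝ≥0∞) : EReal) + ((cL : ℝ) : EReal) :=
        funext fun x => key (s ++ [x])
      rw [hfe]
      have hsub := (hQ s).subadd (fun x => ((∑' n, d n (s ++ [x]) : ℝ≥0∞) : EReal))
        (fun _ => ((cL : ℝ) : EReal))
        (bdd_of_nonneg fun x => EReal.coe_ennreal_nonneg _) ⟨cL, fun _ => le_refl _⟩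
      rw [(hQ s).const cL] at hsub
      refine hsub.trans ?_
      refine add_le_add_left ?_ _
      exact central (hQ s) (fun n x => d n (s ++ [x])) (fun n => d n s) (hstep s)
  · intro h s
    have hrep := (hasSum_rep lam hnn hsum (fun n => Mn n s) 0
      (fun n => by simpa using h n s)).tsum_eq
    rw [hrep, show ((∑' n, lam n) * 0 : ℝ) = 0 by ring, EReal.coe_zero, add_zero]
    exact EReal.coe_ennreal_nonneg _
end

section
/- Let X be a finite non-empty set with an imprecise probability tree (Q_s)_{s∈X*} and associated game-theoretic upper expectation Ē_V. Let x_{1:n} ∈ X* be a situation and f : Ω → ℝ̄ an (n+1)-measurable extended-real variable that is bounded below. Then Ē_V(f | x_{1:n}) = Q_{x_{1:n}}(f(x_{1:n}·)), where f(x_{1:n}·) is the local variable on X defined by f(x_{1:n}·)(x) := f(x_{1:n} x) (the constant value of f on Γ(x_{1:n} x)). -/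
open Filter Topology

/-- Extension of a situation `s` to a path (arbitrary behaviour after `s`). -/
noncomputable def extendPath {X : Type*} [Nonempty X] (s : List X) : ℕ → X :=
  fun i => if h : i < s.length then s.get ⟨i, h⟩ else Classical.arbitrary X

section Aux

variable {X : Type*}

lemma seg_length (ω : ℕ → X) (n : ℕ) : (seg ω n).length = n := by simp [seg]

lemma seg_getElem (ω : ℕ → X) (n i : ℕ) (h : i < (seg ω n).length) : (seg ω n)[i] = ω i := by
  simp [seg]

lemma seg_succ (ω : ℕ → X) (n : ℕ) : seg ω (n + 1) = seg ω n ++ [ω n] := by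
  rw [seg, List.ofFn_succ', List.concat_eq_append]
  simp [seg]

lemma seg_prefix (ω : ℕ → X) {n m : ℕ} (h : n ≤ m) : seg ω n <+: seg ω m := by
  induction m, h using Nat.le_induction with
  | base => exact List.prefix_rfl
  | succ m hm ih => rw [seg_succ]; exact ih.trans (List.prefix_append _ _)

lemma seg_extendPath [Nonempty X] (u : List X) : seg (extendPath u) u.length = u := by
  apply List.ext_getElem (by simp [seg_length])
  intro i h1 h2
  rw [seg_getElem _ _ _ h1]
  simp only [extendPath]
  rw [dif_pos (by simpa [seg_length] using h1)]
  rfl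

/-- In any supermartingale, every situation has a child where the value
does not increase. -/
lemma descent_aux {X : Type*} [Fintype X] [Nonempty X]
    {Q : List X → (X → EReal) → EReal} (hQ : ∀ s, IsUpperExpectation (Q s))
    {M : List X → EReal} (hM : IsSupermartingale Q M) (t : List X) :
    ∃ x : X, M (t ++ [x]) ≤ M t := by
  by_contra h
  push_neg at h
  obtain ⟨⟨B, hB⟩, hsm⟩ := hM
  have hbdd : BddBelowF (fun x : X => M (t ++ [x])) := ⟨B, fun x => hB _⟩
  obtain ⟨r, hr1, hr2⟩ : ∃ r : ℝ, M t < (r : EReal) ∧ ∀ x, (r : EReal) ≤ M (t ++ [x]) := by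
    obtain ⟨m, hm⟩ : ∃ m : EReal,
        m = Finset.univ.inf' Finset.univ_nonempty (fun x : X => M (t ++ [x])) := ⟨_, rfl⟩
    have hlt : M t < m := hm ▸ (Finset.lt_inf'_iff _).2 fun x _ => h x
    have hle : ∀ x, m ≤ M (t ++ [x]) := fun x => hm ▸ Finset.inf'_le _ (Finset.mem_univ x)
    rcases eq_top_or_lt_top m with hm' | hm'
    · obtain ⟨r, h1, h2⟩ := EReal.exists_between_coe_real hlt
      exact ⟨r, h1, fun x => le_trans h2.le (hm' ▸ hle x)⟩
    · have hbot : m ≠ ⊥ := by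
        intro hb
        exact absurd (hb ▸ hlt) (by simp)
      lift m to ℝ using ⟨hm'.ne, hbot⟩
      exact ⟨m, hlt, hle⟩
  have h1 : Q t (fun _ => (r : EReal)) ≤ Q t (fun x => M (t ++ [x])) :=
    (hQ t).mono _ _ ⟨r, fun _ => le_rfl⟩ hbdd hr2
  rw [(hQ t).const r] at h1
  exact absurd (h1.trans (hsm t)) (not_le.2 hr1)

/-- From any situation there is a path along which the supermartingale's
liminf does not exceed its current value. -/
lemma descent_path {X : Type*} [Fintype X] [Nonempty X]
    {Q : List X → (X → EReal) → EReal} (hQ : ∀ s, IsUpperExpectation (Q s))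
    {M : List X → EReal} (hM : IsSupermartingale Q M) (t : List X) :
    ∃ ω : ℕ → X, seg ω t.length = t ∧
      Filter.liminf (fun n => M (seg ω n)) Filter.atTop ≤ M t := by
  choose ch hch using fun u => descent_aux hQ hM u
  let p : ℕ → List X := fun k => Nat.rec t (fun _ u => u ++ [ch u]) k
  have hp0 : p 0 = t := rfl
  have hpsucc : ∀ k, p (k + 1) = p k ++ [ch (p k)] := fun k => rfl
  have hlen : ∀ k, (p k).length = t.length + k := by
    intro k; induction k with
    | zero => simp [hp0]
    | succ k ih => rw [hpsucc, List.length_append, ih]; simp [Nat.add_assoc]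
  have hpre : ∀ {k m : ℕ}, k ≤ m → p k <+: p m := by
    intro k m h
    induction m, h using Nat.le_induction with
    | base => exact List.prefix_rfl
    | succ m hm ih => rw [hpsucc]; exact ih.trans (List.prefix_append _ _)
  have hMle : ∀ k, M (p k) ≤ M t := by
    intro k; induction k with
    | zero => exact le_rfl
    | succ k ih => exact le_trans (by rw [hpsucc]; exact hch (p k)) ih
  set ω : ℕ → X := fun i => (p (i + 1)).getD i (Classical.arbitrary X) with hω
  have hseg : ∀ k, seg ω (t.length + k) = p k := by
    intro k
    apply List.ext_getElem (by have := hlen k; rw [seg_length]; omega)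
    intro i h1 h2
    have hik : i < t.length + k := by simpa [seg_length] using h1
    have hi1 : i < (p (i + 1)).length := by have := hlen (i + 1); omega
    rw [seg_getElem _ _ _ h1, hω]
    show (p (i + 1)).getD i (Classical.arbitrary X) = (p k)[i]
    rw [List.getD_eq_getElem _ _ hi1]
    rcases le_total (i + 1) k with hc | hc
    · exact (hpre hc).getElem hi1
    · exact ((hpre hc).getElem (by have := hlen k; omega)).symm
  have hev : ∀ᶠ n in Filter.atTop, M (seg ω n) ≤ M t := by
    filter_upwards [Filter.eventually_ge_atTop t.length] with n hn
    have hs : seg ω n = p (n - t.length) := by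
      have := hseg (n - t.length)
      rwa [Nat.add_sub_cancel' hn] at this
    rw [hs]; exact hMle _
  exact ⟨ω, by simpa [hp0] using hseg 0, Filter.liminf_le_of_frequently_le' hev.frequently⟩

lemma strict_prefix_length {s t : List X} (h : s <+: t) (hne : t ≠ s) :
    s.length < t.length :=
  lt_of_le_of_ne h.length_le (fun he => hne (h.eq_of_length he).symm)

end Aux

/-- Proposition 6: the game-theoretic upper expectation is compatible with the
local models: for `(n+1)`-measurable bounded-below `f` and a situation `s` of
length `n`, `Ē_V(f | s) = Q_s(f(s·))`. -/
theorem stmt12 {X : Type*} [Fintype X] [Nonempty X]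
    (Q : List X → (X → EReal) → EReal) (hQ : ∀ s, IsUpperExpectation (Q s))
    (s : List X) (f : (ℕ → X) → EReal)
    (hmeas : NMeas (s.length + 1) f) (hb : BddBelowF f) :
    gUE Q f s = Q s (fun x => f (extendPath (s ++ [x]))) := by
  classical
  set g : X → EReal := fun x => f (extendPath (s ++ [x])) with hg
  obtain ⟨Bf, hBf⟩ := hb
  have hgbdd : BddBelowF g := ⟨Bf, fun x => hBf _⟩
  -- `f` agrees with `g x` on `cyl (s ++ [x])`
  have hfg : ∀ (x : X) (ω : ℕ → X), seg ω (s.length + 1) = s ++ [x] → f ω = g x := by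
    intro x ω hωs
    apply hmeas
    have h2 := seg_extendPath (s ++ [x])
    rw [List.length_append, List.length_singleton] at h2
    rw [hωs, h2]
  have hQg : (Bf : EReal) ≤ Q s g := by
    have := (hQ s).mono (fun _ => (Bf : EReal)) g ⟨Bf, fun _ => le_rfl⟩ hgbdd (fun x => hBf _)
    rwa [(hQ s).const] at this
  apply le_antisymm
  · -- upper bound: exhibit an explicit supermartingale
    have constLe : ∀ (t : List X) (c : EReal), (Bf : EReal) ≤ c → Q t (fun _ => c) ≤ c := by
      intro t c hc
      rcases eq_top_or_lt_top c with h | h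
      · exact h ▸ le_top
      · lift c to ℝ using ⟨h.ne, fun hbot => by simp [hbot] at hc⟩
        rw [(hQ t).const]
    set M : List X → EReal := fun t =>
      if s <+: t ∧ t ≠ s then g (t.getD s.length (Classical.arbitrary X)) else Q s g
      with hMdef
    have hMval : ∀ t, (Bf : EReal) ≤ M t := by
      intro t
      simp only [hMdef]
      split
      · exact hBf _
      · exact hQg
    have hMsm : IsSupermartingale Q M := by
      refine ⟨⟨Bf, hMval⟩, ?_⟩
      intro t
      by_cases ht : s <+: t
      · rcases eq_or_ne t s with rfl | hne
        · -- at `t = s` the children values are exactly `g`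
          have hgc : (fun x => M (t ++ [x])) = g := by
            funext x
            simp only [hMdef]
            rw [if_pos ⟨List.prefix_append _ _, by simp⟩]
            congr 1
            rw [List.getD_eq_getElem _ _ (by simp)]
            exact List.getElem_concat_length rfl _
          rw [hgc]
          simp only [hMdef]
          rw [if_neg (by simp)]
        · -- `s` is a strict prefix of `t` : children values constant `M t`
          have hlt : s.length < t.length := strict_prefix_length ht hne
          have hchild : ∀ x, M (t ++ [x]) = M t := by
            intro x
            simp only [hMdef]
            rw [if_pos ⟨ht.trans (List.prefix_append _ _), by
                  intro hcon
                  have := congrArg List.length hcon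
                  simp at this; omega⟩,
              if_pos ⟨ht, hne⟩]
            congr 1
            rw [List.getD_eq_getElem _ _
                (by simp only [List.length_append, List.length_singleton]; omega),
              List.getD_eq_getElem _ _ (by omega)]
            exact List.getElem_append_left hlt
          have : (fun x => M (t ++ [x])) = fun _ => M t := funext hchild
          rw [this]
          apply constLe
          exact hMval t
      · -- `s` is not a prefix of `t` : children values constant `Q s g`
        have hchild : ∀ x, M (t ++ [x]) = Q s g := by
          intro x
          have hneg : ¬(s <+: t ++ [x] ∧ t ++ [x] ≠ s) := by
            rintro ⟨hpre, hne⟩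
            have hlen : s.length ≤ t.length := by
              have h1 := hpre.length_le
              simp only [List.length_append, List.length_singleton] at h1
              rcases Nat.lt_or_ge s.length (t.length + 1) with h2 | h2
              · omega
              · exact absurd (hpre.eq_of_length (by
                    simp only [List.length_append, List.length_singleton]; omega))
                  (Ne.symm hne)
            exact ht (List.prefix_of_prefix_length_le hpre (List.prefix_append _ _) hlen)
          simp only [hMdef]
          rw [if_neg hneg]
        have hMt : M t = Q s g := by
          simp only [hMdef]
          rw [if_neg (fun hcon => ht hcon.1)]
        rw [funext hchild, hMt]
        exact constLe _ _ hQg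
    have hlimc : ∀ ω ∈ cyl s, f ω ≤ Filter.liminf (fun n => M (seg ω n)) Filter.atTop := by
      intro ω hω
      have hωs : seg ω s.length = s := hω
      have hfω : f ω = g (ω s.length) := by
        apply hfg
        rw [seg_succ, hωs]
      rw [hfω]
      have hev : ∀ᶠ n in Filter.atTop, M (seg ω n) = g (ω s.length) := by
        filter_upwards [Filter.eventually_ge_atTop (s.length + 1)] with n hn
        have hpre : s <+: seg ω n := hωs ▸ seg_prefix ω (le_trans (Nat.le_succ _) hn)
        have hne : seg ω n ≠ s := by
          intro h
          have := congrArg List.length h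
          rw [seg_length] at this; omega
        simp only [hMdef]
        rw [if_pos ⟨hpre, hne⟩]
        congr 1
        rw [List.getD_eq_getElem _ _ (by rw [seg_length]; omega)]
        exact seg_getElem ω n s.length (by rw [seg_length]; omega)
      rw [Filter.liminf_congr hev, Filter.liminf_const]
    refine sInf_le ⟨M, hMsm, hlimc, ?_⟩
    simp only [hMdef]
    rw [if_neg (by simp)]
  · -- lower bound: every admissible supermartingale dominates `Q s g` at `s`
    refine le_sInf ?_
    rintro y ⟨M, hM, hlim, rfl⟩
    have key : ∀ x, g x ≤ M (s ++ [x]) := by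
      intro x
      obtain ⟨ω, hωseg, hωlim⟩ := descent_path hQ hM (s ++ [x])
      rw [List.length_append, List.length_singleton] at hωseg
      have hωcyl : ω ∈ cyl s := by
        have h1 := hωseg
        rw [seg_succ] at h1
        exact (List.append_inj h1 (by simp [seg_length])).1
      calc g x = f ω := (hfg x ω hωseg).symm
        _ ≤ Filter.liminf (fun n => M (seg ω n)) Filter.atTop := hlim ω hωcyl
        _ ≤ M (s ++ [x]) := hωlim
    obtain ⟨⟨B, hB⟩, hsm⟩ := hM
    exact le_trans ((hQ s).mono _ _ hgbdd ⟨B, fun x => hB _⟩ key) (hsm s)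
end
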